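/- arXiv:1307.4700 — 4 statements merged into one kernel-verified Lean document; each statement's English description precedes it below -/
import Mathlib

section
/- If z ∈ ℝ^m satisfies ‖z‖_{LL2,γ} ≤ ε for some γ > 0 and ε ≥ 0, then ‖z‖₂ ≤ γ √(m(e^ε − 1)). -/
theorem lorentzian_ball_l2_bound (m : ℕ) (γ ε : ℝ) (hγ : 0 < γ) (hε : 0 ≤ ε)
    (z : Fin m → ℝ)
    (hz : ∑ i, Real.log (1 + (z i) ^ 2 / γ ^ 2) ≤ ε) :
    Real.sqrt (∑ i, (z i) ^ 2) ≤ γ * Real.sqrt (m * (Real.exp ε - 1)) := by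
  have hγ2 : (0:ℝ) < γ ^ 2 := by positivity
  have key : ∀ i, (z i) ^ 2 ≤ γ ^ 2 * (Real.exp ε - 1) := by
    intro i
    have hq : (0:ℝ) ≤ (z i) ^ 2 / γ ^ 2 := by positivity
    have hpos : (1:ℝ) ≤ 1 + (z i) ^ 2 / γ ^ 2 := by linarith
    have hnn : ∀ j ∈ Finset.univ, (0:ℝ) ≤ Real.log (1 + (z j) ^ 2 / γ ^ 2) := by
      intro j _
      have : (0:ℝ) ≤ (z j) ^ 2 / γ ^ 2 := by positivity
      exact Real.log_nonneg (by linarith)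
    have h1 : Real.log (1 + (z i) ^ 2 / γ ^ 2) ≤ ε :=
      le_trans (Finset.single_le_sum hnn (Finset.mem_univ i)) hz
    have h2 : 1 + (z i) ^ 2 / γ ^ 2 ≤ Real.exp ε := by
      have := Real.exp_le_exp.mpr h1
      rwa [Real.exp_log (by linarith)] at this
    have h3 : (z i) ^ 2 / γ ^ 2 ≤ Real.exp ε - 1 := by linarith
    calc (z i) ^ 2 = γ ^ 2 * ((z i) ^ 2 / γ ^ 2) := by field_simp
      _ ≤ γ ^ 2 * (Real.exp ε - 1) := by
          exact mul_le_mul_of_nonneg_left h3 (le_of_lt hγ2)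
  have hsum : ∑ i, (z i) ^ 2 ≤ m * (γ ^ 2 * (Real.exp ε - 1)) := by
    calc ∑ i, (z i) ^ 2 ≤ ∑ _i : Fin m, γ ^ 2 * (Real.exp ε - 1) :=
          Finset.sum_le_sum fun i _ => key i
      _ = m * (γ ^ 2 * (Real.exp ε - 1)) := by simp [Finset.sum_const, nsmul_eq_mul]
  have := Real.sqrt_le_sqrt hsum
  refine this.trans (le_of_eq ?_)
  rw [show (m : ℝ) * (γ ^ 2 * (Real.exp ε - 1)) = γ ^ 2 * (m * (Real.exp ε - 1)) by ring,
    Real.sqrt_mul (le_of_lt hγ2), Real.sqrt_sq hγ.le]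
end

section
/- Let γ > 0 and r, r' ∈ ℝ^m. Let W be the diagonal matrix with [W]_{ii} = γ²/(γ² + r_i²). If ‖W^{1/2} r'‖₂² ≤ ‖W^{1/2} r‖₂², then ‖r'‖_{LL2,γ} ≤ ‖r‖_{LL2,γ}. -/
theorem weighted_ls_descent_implies_lorentzian_descent (m : ℕ) (γ : ℝ) (hγ : 0 < γ)
    (r r' : Fin m → ℝ)
    (h : ∑ i, (γ ^ 2 / (γ ^ 2 + (r i) ^ 2)) * (r' i) ^ 2 ≤
         ∑ i, (γ ^ 2 / (γ ^ 2 + (r i) ^ 2)) * (r i) ^ 2) :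
    ∑ i, Real.log (1 + (r' i) ^ 2 / γ ^ 2) ≤
      ∑ i, Real.log (1 + (r i) ^ 2 / γ ^ 2) := by
  have hγ2 : (0:ℝ) < γ ^ 2 := by positivity
  have key : ∀ i, Real.log (1 + (r' i) ^ 2 / γ ^ 2) - Real.log (1 + (r i) ^ 2 / γ ^ 2)
      ≤ (γ ^ 2 / (γ ^ 2 + (r i) ^ 2)) * (r' i) ^ 2 / γ ^ 2
        - (γ ^ 2 / (γ ^ 2 + (r i) ^ 2)) * (r i) ^ 2 / γ ^ 2 := by
    intro i
    have ha : (0:ℝ) < 1 + (r i) ^ 2 / γ ^ 2 := by positivity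
    have hb : (0:ℝ) < 1 + (r' i) ^ 2 / γ ^ 2 := by positivity
    have hd : (0:ℝ) < γ ^ 2 + (r i) ^ 2 := by positivity
    have := Real.log_le_sub_one_of_pos (x := (1 + (r' i) ^ 2 / γ ^ 2) / (1 + (r i) ^ 2 / γ ^ 2))
      (by positivity)
    rw [Real.log_div hb.ne' ha.ne'] at this
    have heq : (1 + (r' i) ^ 2 / γ ^ 2) / (1 + (r i) ^ 2 / γ ^ 2) - 1
        = (γ ^ 2 / (γ ^ 2 + (r i) ^ 2)) * (r' i) ^ 2 / γ ^ 2
          - (γ ^ 2 / (γ ^ 2 + (r i) ^ 2)) * (r i) ^ 2 / γ ^ 2 := by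
      field_simp
      ring
    linarith [this, heq ▸ this]
  have hsum := Finset.sum_le_sum (fun i (_ : i ∈ Finset.univ) => key i)
  rw [Finset.sum_sub_distrib, Finset.sum_sub_distrib] at hsum
  have h1 : ∑ i, (γ ^ 2 / (γ ^ 2 + (r i) ^ 2)) * (r' i) ^ 2 / γ ^ 2
      ≤ ∑ i, (γ ^ 2 / (γ ^ 2 + (r i) ^ 2)) * (r i) ^ 2 / γ ^ 2 := by
    rw [← Finset.sum_div, ← Finset.sum_div]
    exact div_le_div_of_nonneg_right h hγ2.le
  linarith
end

section
/- Let Φ be an m×n matrix with RIP constant δ_s, and let S, S' be disjoint index sets with |S| + |S'| ≤ s. Then for all vectors u supported on S and v supported on S', |⟨Φu, Φv⟩| ≤ δ_s ‖u‖₂ ‖v‖₂. -/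
/-- Φ satisfies the RIP of order `s` with constant `δ`. -/
def RIPWith {m n : ℕ} (Φ : Matrix (Fin m) (Fin n) ℝ) (s : ℕ) (δ : ℝ) : Prop :=
  ∀ v : Fin n → ℝ, (Finset.univ.filter (fun i => v i ≠ 0)).card ≤ s →
    (1 - δ) * (∑ i, (v i) ^ 2) ≤ (∑ j, (Φ.mulVec v j) ^ 2) ∧
    (∑ j, (Φ.mulVec v j) ^ 2) ≤ (1 + δ) * (∑ i, (v i) ^ 2)

lemma rip_aux {m n : ℕ} (Φ : Matrix (Fin m) (Fin n) ℝ)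
    (s : ℕ) (δ : ℝ) (hRIP : RIPWith Φ s δ)
    (S S' : Finset (Fin n)) (hdisj : Disjoint S S') (hcard : S.card + S'.card ≤ s)
    (u v : Fin n → ℝ) (hu : ∀ i, i ∉ S → u i = 0) (hv : ∀ i, i ∉ S' → v i = 0) :
    |∑ j, Φ.mulVec u j * Φ.mulVec v j| ≤
      δ / 2 * ((∑ i, (u i) ^ 2) + ∑ i, (v i) ^ 2) := by
  have hsupp : ∀ w : Fin n → ℝ, (∀ i, i ∉ S ∪ S' → w i = 0) →
      (Finset.univ.filter (fun i => w i ≠ 0)).card ≤ s := by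
    intro w hw
    refine le_trans (Finset.card_le_card ?_) (le_trans (Finset.card_union_le S S') hcard)
    intro i hi
    simp only [Finset.mem_filter] at hi
    by_contra h
    exact hi.2 (hw i h)
  have h1 := hRIP (u + v) (hsupp _ (by
    intro i hi
    simp only [Finset.mem_union, not_or] at hi
    simp [hu i hi.1, hv i hi.2]))
  have h2 := hRIP (u - v) (hsupp _ (by
    intro i hi
    simp only [Finset.mem_union, not_or] at hi
    simp [hu i hi.1, hv i hi.2]))
  have horth : ∑ i, u i * v i = 0 := by
    apply Finset.sum_eq_zero
    intro i _
    by_cases h : i ∈ S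
    · rw [hv i (Finset.disjoint_left.mp hdisj h), mul_zero]
    · rw [hu i h, zero_mul]
  have hsum1 : ∑ i, ((u + v) i) ^ 2 = (∑ i, (u i) ^ 2) + ∑ i, (v i) ^ 2 := by
    have : ∑ i, ((u + v) i) ^ 2
        = ∑ i, ((u i) ^ 2 + (v i) ^ 2 + 2 * (u i * v i)) := by
      exact Finset.sum_congr rfl (fun i _ => by simp [Pi.add_apply]; ring)
    rw [this, Finset.sum_add_distrib, Finset.sum_add_distrib, ← Finset.mul_sum, horth]
    ring
  have hsum2 : ∑ i, ((u - v) i) ^ 2 = (∑ i, (u i) ^ 2) + ∑ i, (v i) ^ 2 := by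
    have : ∑ i, ((u - v) i) ^ 2
        = ∑ i, ((u i) ^ 2 + (v i) ^ 2 - 2 * (u i * v i)) := by
      exact Finset.sum_congr rfl (fun i _ => by simp [Pi.sub_apply]; ring)
    rw [this]
    rw [Finset.sum_sub_distrib, Finset.sum_add_distrib, ← Finset.mul_sum, horth]
    ring
  have hmv1 : ∀ j, Φ.mulVec (u + v) j = Φ.mulVec u j + Φ.mulVec v j := by
    intro j; rw [Matrix.mulVec_add]; rfl
  have hmv2 : ∀ j, Φ.mulVec (u - v) j = Φ.mulVec u j - Φ.mulVec v j := by
    intro j; rw [Matrix.mulVec_sub]; rfl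
  have hdiff : (∑ j, (Φ.mulVec (u + v) j) ^ 2) - (∑ j, (Φ.mulVec (u - v) j) ^ 2)
      = 4 * ∑ j, Φ.mulVec u j * Φ.mulVec v j := by
    rw [← Finset.sum_sub_distrib, Finset.mul_sum]
    exact Finset.sum_congr rfl (fun j _ => by rw [hmv1, hmv2]; ring)
  obtain ⟨h1l, h1r⟩ := h1
  obtain ⟨h2l, h2r⟩ := h2
  set T := (∑ i, (u i) ^ 2) + ∑ i, (v i) ^ 2 with hT
  set P := ∑ j, Φ.mulVec u j * Φ.mulVec v j with hP
  set X := ∑ j, (Φ.mulVec (u + v) j) ^ 2 with hX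
  set Y := ∑ j, (Φ.mulVec (u - v) j) ^ 2 with hY
  have hT0 : 0 ≤ T := by
    apply add_nonneg <;> exact Finset.sum_nonneg (fun i _ => sq_nonneg _)
  rw [hsum1] at h1l h1r
  rw [hsum2] at h2l h2r
  clear_value T P X Y
  rw [abs_le]
  constructor
  · linarith
  · linarith

theorem rip_disjoint_inner_product_bound {m n : ℕ} (Φ : Matrix (Fin m) (Fin n) ℝ)
    (s : ℕ) (δ : ℝ) (hRIP : RIPWith Φ s δ)
    (S S' : Finset (Fin n)) (hdisj : Disjoint S S') (hcard : S.card + S'.card ≤ s)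
    (u v : Fin n → ℝ) (hu : ∀ i, i ∉ S → u i = 0) (hv : ∀ i, i ∉ S' → v i = 0) :
    |∑ j, Φ.mulVec u j * Φ.mulVec v j| ≤
      δ * Real.sqrt (∑ i, (u i) ^ 2) * Real.sqrt (∑ i, (v i) ^ 2) := by
  set A := ∑ i, (u i) ^ 2 with hA
  set B := ∑ i, (v i) ^ 2 with hB
  have hA0 : 0 ≤ A := Finset.sum_nonneg (fun i _ => sq_nonneg _)
  have hB0 : 0 ≤ B := Finset.sum_nonneg (fun i _ => sq_nonneg _)
  set a := Real.sqrt A with ha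
  set b := Real.sqrt B with hb
  have ha2 : a ^ 2 = A := Real.sq_sqrt hA0
  have hb2 : b ^ 2 = B := Real.sq_sqrt hB0
  have ha0 : 0 ≤ a := Real.sqrt_nonneg _
  have hb0 : 0 ≤ b := Real.sqrt_nonneg _
  by_cases hAz : A = 0
  · have hu0 : ∀ i, u i = 0 := by
      intro i
      have hz0 : ∑ i, (u i) ^ 2 = 0 := by rw [← hA]; exact hAz
      have hz := (Finset.sum_eq_zero_iff_of_nonneg
        (fun i (_ : i ∈ Finset.univ) => sq_nonneg (u i))).mp hz0 i (Finset.mem_univ i)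
      exact pow_eq_zero_iff (n := 2) (by norm_num) |>.mp hz
    have : ∀ j, Φ.mulVec u j = 0 := by
      intro j; unfold Matrix.mulVec dotProduct; simp [hu0]
    simp [this, ha, hAz, Real.sqrt_zero]
  by_cases hBz : B = 0
  · have hv0 : ∀ i, v i = 0 := by
      intro i
      have hz0 : ∑ i, (v i) ^ 2 = 0 := by rw [← hB]; exact hBz
      have hz := (Finset.sum_eq_zero_iff_of_nonneg
        (fun i (_ : i ∈ Finset.univ) => sq_nonneg (v i))).mp hz0 i (Finset.mem_univ i)
      exact pow_eq_zero_iff (n := 2) (by norm_num) |>.mp hz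
    have : ∀ j, Φ.mulVec v j = 0 := by
      intro j; unfold Matrix.mulVec dotProduct; simp [hv0]
    simp [this, hb, hBz, Real.sqrt_zero]
  have hap : 0 < a := Real.sqrt_pos.mpr (lt_of_le_of_ne hA0 (Ne.symm hAz))
  have hbp : 0 < b := Real.sqrt_pos.mpr (lt_of_le_of_ne hB0 (Ne.symm hBz))
  -- apply aux to scaled vectors
  have key := rip_aux Φ s δ hRIP S S' hdisj hcard (b • u) (a • v)
    (fun i hi => by simp [hu i hi]) (fun i hi => by simp [hv i hi])
  have e1 : ∑ j, Φ.mulVec (b • u) j * Φ.mulVec (a • v) j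
      = a * b * ∑ j, Φ.mulVec u j * Φ.mulVec v j := by
    rw [Finset.mul_sum]
    refine Finset.sum_congr rfl (fun j _ => ?_)
    rw [Matrix.mulVec_smul, Matrix.mulVec_smul]
    simp [smul_eq_mul]; ring
  have e2 : ∑ i, ((b • u) i) ^ 2 = b ^ 2 * A := by
    rw [hA, Finset.mul_sum]
    exact Finset.sum_congr rfl (fun i _ => by simp [smul_eq_mul]; ring)
  have e3 : ∑ i, ((a • v) i) ^ 2 = a ^ 2 * B := by
    rw [hB, Finset.mul_sum]
    exact Finset.sum_congr rfl (fun i _ => by simp [smul_eq_mul]; ring)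
  rw [e1, e2, e3, abs_mul, abs_of_pos (mul_pos hap hbp)] at key
  have hab : 0 < a * b := mul_pos hap hbp
  rw [← ha2, ← hb2] at key
  -- key : a*b*|P| ≤ δ/2 * (b^2 * a^2 + a^2 * b^2)
  have : a * b * |∑ j, Φ.mulVec u j * Φ.mulVec v j| ≤ a * b * (δ * a * b) := by
    nlinarith [key]
  calc |∑ j, Φ.mulVec u j * Φ.mulVec v j|
      ≤ δ * a * b := le_of_mul_le_mul_left (by linarith [this]) hab
    _ = δ * a * b := rfl
end

section
/- Let a ∈ ℝ^n, T₀ ⊆ {1,…,n}, and let H^{T₀}_u(a) = a_{T₀} + H_u(a_{T₀^c}), where H_u keeps the u largest-magnitude entries and zeroes the rest. Then for any vector x supported on T₀ ∪ Δ with |Δ| ≤ u and Δ ∩ T₀ = ∅, we have ‖(H^{T₀}_u(a))_B − a_B‖₂ ≤ ‖x_B − a_B‖₂, where B = supp(x) ∪ supp(H^{T₀}_u(a)). -/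
theorem pks_thresholding_best_approx (n u : ℕ) (a : Fin n → ℝ)
    (T0 S Δ : Finset (Fin n))
    (hScard : S.card = u) (hSdisj : Disjoint S T0)
    (hsel : ∀ i ∈ S, ∀ j, j ∉ S → j ∉ T0 → |a j| ≤ |a i|)
    (x : Fin n → ℝ) (hΔcard : Δ.card ≤ u) (hΔdisj : Disjoint Δ T0)
    (hx : ∀ i, i ∉ T0 ∪ Δ → x i = 0) :
    let h : Fin n → ℝ := fun i => if i ∈ T0 ∪ S then a i else 0
    let B : Finset (Fin n) := Finset.univ.filter (fun i => x i ≠ 0 ∨ h i ≠ 0)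
    Real.sqrt (∑ i ∈ B, (h i - a i) ^ 2) ≤
      Real.sqrt (∑ i ∈ B, (x i - a i) ^ 2) := by
  intro h B
  apply Real.sqrt_le_sqrt
  classical
  set D : Finset (Fin n) := B.filter (fun i => i ∉ T0 ∪ S) with hDdef
  have hDprop : ∀ i ∈ D, i ∉ T0 ∧ i ∉ S ∧ i ∈ Δ ∧ x i ≠ 0 := by
    intro i hi
    simp only [hDdef, Finset.mem_filter, Finset.mem_union] at hi
    push_neg at hi
    obtain ⟨hiB, hT0, hS⟩ := hi
    have hh : h i = 0 := by
      simp only [h, Finset.mem_union]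
      rw [if_neg (by tauto)]
    have hxne : x i ≠ 0 := by
      simp only [B, Finset.mem_filter] at hiB
      rcases hiB.2 with h1 | h2
      · exact h1
      · exact absurd hh h2
    have hiΔ : i ∈ Δ := by
      by_contra hΔ
      exact hxne (hx i (by simp [hT0, hΔ]))
    exact ⟨hT0, hS, hiΔ, hxne⟩
  -- LHS = ∑ over D of a i ^ 2
  have hL : ∑ i ∈ B, (h i - a i) ^ 2 = ∑ i ∈ D, a i ^ 2 := by
    rw [← Finset.sum_filter_add_sum_filter_not B (fun i => i ∉ T0 ∪ S)]
    have h1 : ∑ i ∈ B.filter (fun i => ¬ i ∉ T0 ∪ S), (h i - a i) ^ 2 = 0 := by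
      apply Finset.sum_eq_zero
      intro i hi
      simp only [Finset.mem_filter, not_not] at hi
      simp only [h]
      rw [if_pos hi.2]
      ring
    have h2 : ∑ i ∈ D, (h i - a i) ^ 2 = ∑ i ∈ D, a i ^ 2 := by
      apply Finset.sum_congr rfl
      intro i hi
      have : i ∉ T0 ∪ S := (Finset.mem_filter.mp hi).2
      simp only [h, if_neg this]
      ring
    rw [h1, h2, add_zero]
  set S0 : Finset (Fin n) := S.filter (fun i => x i = 0) with hS0def
  -- RHS ≥ ∑ over S0 of a i ^ 2
  have hR : ∑ i ∈ S0, a i ^ 2 ≤ ∑ i ∈ B, (x i - a i) ^ 2 := by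
    have hsub : S0 ∩ B ⊆ B := Finset.inter_subset_right
    have hstep : ∑ i ∈ S0, a i ^ 2 = ∑ i ∈ S0 ∩ B, a i ^ 2 := by
      apply (Finset.sum_subset Finset.inter_subset_left ?_).symm
      intro i hiS0 hiB
      have hiS : i ∈ S := (Finset.mem_filter.mp hiS0).1
      have hx0 : x i = 0 := (Finset.mem_filter.mp hiS0).2
      have hh : h i = a i := by
        simp only [h]
        rw [if_pos (Finset.mem_union_right _ hiS)]
      have : ¬ (x i ≠ 0 ∨ h i ≠ 0) := by
        intro hc
        apply hiB
        simp only [Finset.mem_inter, Finset.mem_filter, Finset.mem_univ] at *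
        exact ⟨hiS0, by simpa [B] using hc⟩
      push_neg at this
      rw [← hh, this.2]
      ring
    rw [hstep]
    calc ∑ i ∈ S0 ∩ B, a i ^ 2 = ∑ i ∈ S0 ∩ B, (x i - a i) ^ 2 := by
          apply Finset.sum_congr rfl
          intro i hi
          have hx0 : x i = 0 := (Finset.mem_filter.mp (Finset.mem_inter.mp hi).1).2
          rw [hx0]; ring
      _ ≤ ∑ i ∈ B, (x i - a i) ^ 2 := by
          apply Finset.sum_le_sum_of_subset_of_nonneg hsub
          intro i _ _
          positivity
  rw [hL]
  refine le_trans ?_ hR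
  -- card comparison: D.card ≤ S0.card
  have hcard : D.card ≤ S0.card := by
    set A : Finset (Fin n) := S.filter (fun i => x i ≠ 0) with hAdef
    have hAΔ : A ⊆ Δ := by
      intro i hi
      simp only [hAdef, Finset.mem_filter] at hi
      have hT0 : i ∉ T0 := Finset.disjoint_left.mp hSdisj hi.1
      by_contra hΔ
      exact hi.2 (hx i (by simp [hT0, hΔ]))
    have hDΔ : D ⊆ Δ \ S := by
      intro i hi
      obtain ⟨_, hS, hΔ, _⟩ := hDprop i hi
      exact Finset.mem_sdiff.mpr ⟨hΔ, hS⟩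
    have hdisj : Disjoint D A := by
      apply Finset.disjoint_left.mpr
      intro i hiD hiA
      exact ((hDprop i hiD).2.1) ((Finset.mem_filter.mp hiA).1)
    have h1 : D.card + A.card = (D ∪ A).card := (Finset.card_union_of_disjoint hdisj).symm
    have h2 : D ∪ A ⊆ Δ := Finset.union_subset (fun i hi => (Finset.mem_sdiff.mp (hDΔ hi)).1) hAΔ
    have h3 : D.card + A.card ≤ u := by
      rw [h1]; exact le_trans (Finset.card_le_card h2) hΔcard
    have h4 : S0.card + A.card = u := by
      rw [hS0def, hAdef, ← hScard]
      exact Finset.card_filter_add_card_filter_not (fun i => x i = 0)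
    omega
  -- compare sums via min over S0
  rcases Finset.eq_empty_or_nonempty S0 with hS0e | hS0ne
  · have : D = ∅ := Finset.card_eq_zero.mp (by simpa [hS0e] using hcard)
    simp [this, hS0e]
  · set c : ℝ := S0.inf' hS0ne (fun i => a i ^ 2) with hcdef
    obtain ⟨i0, hi0, hci0⟩ := S0.exists_mem_eq_inf' hS0ne (fun i => a i ^ 2)
    have hi0S : i0 ∈ S := (Finset.mem_filter.mp hi0).1
    have hc0 : 0 ≤ c := by rw [hcdef, hci0]; positivity
    have hDc : ∀ i ∈ D, a i ^ 2 ≤ c := by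
      intro i hi
      obtain ⟨hT0, hS, _, _⟩ := hDprop i hi
      have := hsel i0 hi0S i hS hT0
      calc a i ^ 2 = |a i| ^ 2 := (sq_abs _).symm
        _ ≤ |a i0| ^ 2 := by apply pow_le_pow_left₀ (abs_nonneg _) this
        _ = a i0 ^ 2 := sq_abs _
        _ = c := by rw [hcdef, hci0]
    calc ∑ i ∈ D, a i ^ 2 ≤ ∑ _i ∈ D, c := Finset.sum_le_sum hDc
      _ = D.card * c := by rw [Finset.sum_const, nsmul_eq_mul]
      _ ≤ S0.card * c := by
          apply mul_le_mul_of_nonneg_right _ hc0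
          exact_mod_cast hcard
      _ ≤ ∑ i ∈ S0, a i ^ 2 := by
          have := Finset.card_nsmul_le_sum S0 (fun i => a i ^ 2) c
            (fun i hi => Finset.inf'_le _ hi)
          simpa [nsmul_eq_mul] using this
end
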